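/- Let {x_i*} be the dual basis of g* = gl(n|n)/p(n)-complement as in the paper, and ε the contraction operator on V ⊗ V. Then for each i and all p, q ∈ I: ε(x_i* e_p ⊗ e_q − (−1)^{|x_i||e_p|} e_p ⊗ x_i* e_q) = 0. -/

import Mathlib

open Sum Matrix

/-! `V = ℂ^{n|n}` with basis indexed by `Idx n = Fin n ⊕ Fin n`
(`Sum.inl` = even indices, `Sum.inr` = odd); `gl(n|n)` is realized as
`Matrix (Idx n) (Idx n) ℂ`, and `V ⊗ V` as coordinate functions
`Idx n × Idx n → ℂ`. -/

abbrev Idx (n : ℕ) := Fin n ⊕ Fin n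

/-- The bar involution `i ↦ ī`. -/
def bar {n : ℕ} : Idx n → Idx n := Sum.swap

/-- Parity: `false` (even) on `1,…,n`, `true` (odd) on `1̄,…,n̄`. -/
def pIdx {n : ℕ} : Idx n → Bool := Sum.elim (fun _ => false) (fun _ => true)

/-- The sign `(−1)^{|e_i|}`. -/
def sgn {n : ℕ} (i : Idx n) : ℂ := if pIdx i then -1 else 1

/-- `V ⊗ V` in coordinates. -/
abbrev VV (n : ℕ) := Idx n × Idx n → ℂ

/-- `ε(e_a ⊗ e_b) = δ_{a,b̄} ∑_{i∈I} (−1)^{|e_i|} e_i ⊗ e_{ī}`. -/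
noncomputable def epsOp (n : ℕ) : VV n →ₗ[ℂ] VV n :=
  LinearMap.pi fun p =>
    (if p.2 = bar p.1 then sgn p.1 else 0) • ∑ a : Idx n, LinearMap.proj (a, bar a)

/-- The basis vector `e_k` of `V`. -/
noncomputable def stdVec {n : ℕ} (k : Idx n) : Idx n → ℂ := Pi.single k 1

/-- The column `X e_k` of a matrix `X ∈ gl(n|n)`. -/
def colVec {n : ℕ} (X : Matrix (Idx n) (Idx n) ℂ) (k : Idx n) : Idx n → ℂ :=
  fun a => X a k

/-- The pure tensor `u ⊗ v ∈ V ⊗ V` in coordinates. -/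
def tens {n : ℕ} (u v : Idx n → ℂ) : VV n := fun p => u p.1 * v p.2

/-- Membership in the periplectic Lie superalgebra
`p(n) = {[[A,U],[L,−Aᵗ]] : U symmetric, L skew-symmetric} ⊂ gl(n|n)`. -/
def IsPn {n : ℕ} (X : Matrix (Idx n) (Idx n) ℂ) : Prop :=
  (∀ s t, X (inr s) (inr t) = -X (inl t) (inl s)) ∧
  (∀ s t, X (inl s) (inr t) = X (inl t) (inr s)) ∧
  (∀ s t, X (inr s) (inl t) = -X (inr t) (inl s))

/-- `X` is homogeneous of parity `px` (`false` = even, `true` = odd). -/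
def IsHomog {n : ℕ} (X : Matrix (Idx n) (Idx n) ℂ) (px : Bool) : Prop :=
  ∀ a b, X a b ≠ 0 → Bool.xor (pIdx a) (pIdx b) = px

/-- The sign `(−1)^{|x||e_a|}` for `x` of parity `px`. -/
def hSign {n : ℕ} (px : Bool) (a : Idx n) : ℂ := if px && pIdx a then -1 else 1

/-- Dual basis element `E*_{st} = ½ [[e_{ts},0],[0,e_{st}]]` (even). -/
noncomputable def Estar {n : ℕ} (s t : Fin n) : Matrix (Idx n) (Idx n) ℂ :=
  (2⁻¹ : ℂ) • (Matrix.single (inl t) (inl s) 1 +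
    Matrix.single (inr s) (inr t) 1)

/-- Dual basis element `X*_{st} = −½ [[0,0],[e_{ts}+e_{st},0]]` (odd), `s ≠ t`. -/
noncomputable def Xstar {n : ℕ} (s t : Fin n) : Matrix (Idx n) (Idx n) ℂ :=
  (-(2⁻¹ : ℂ)) • (Matrix.single (inr t) (inl s) 1 +
    Matrix.single (inr s) (inl t) 1)

/-- Dual basis element `X*_{ss} = −[[0,0],[e_{ss},0]]` (odd). -/
noncomputable def Xstarss {n : ℕ} (s : Fin n) : Matrix (Idx n) (Idx n) ℂ :=
  -Matrix.single (inr s) (inl s) (1 : ℂ)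

/-- Dual basis element `Y*_{st} = −½ [[0,e_{st}−e_{ts}],[0,0]]` (odd), `s ≠ t`. -/
noncomputable def Ystar {n : ℕ} (s t : Fin n) : Matrix (Idx n) (Idx n) ℂ :=
  (-(2⁻¹ : ℂ)) • (Matrix.single (inl s) (inr t) 1 -
    Matrix.single (inl t) (inr s) 1)

/-- The identity of Lemma A.5 (equation (A.7)) for a matrix `X` of parity
`px`: `ε(X e_p ⊗ e_q − (−1)^{|x||e_p|} e_p ⊗ X e_q) = 0` for all `p, q`. -/
def EpsIdent {n : ℕ} (X : Matrix (Idx n) (Idx n) ℂ) (px : Bool) : Prop :=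
  ∀ p q : Idx n,
    epsOp n (tens (colVec X p) (stdVec q) -
      hSign px p • tens (stdVec p) (colVec X q)) = 0

lemma bar_bar {n : ℕ} (a : Idx n) : bar (bar a) = a := Sum.swap_swap a

lemma epsIdent_of {n : ℕ} (X : Matrix (Idx n) (Idx n) ℂ) (px : Bool)
    (h : ∀ p q : Idx n, X (bar q) p = hSign px p * X (bar p) q) :
    EpsIdent X px := by
  intro p q
  funext r
  simp only [epsOp, LinearMap.pi_apply, LinearMap.smul_apply, LinearMap.sum_apply,
    LinearMap.proj_apply, Pi.zero_apply, smul_eq_mul]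
  have hsum : (∑ a : Idx n,
      (tens (colVec X p) (stdVec q) - hSign px p • tens (stdVec p) (colVec X q)) (a, bar a))
      = 0 := by
    have e1 : ∀ a : Idx n,
        (tens (colVec X p) (stdVec q) - hSign px p • tens (stdVec p) (colVec X q)) (a, bar a)
        = X a p * (if a = bar q then 1 else 0)
          - hSign px p * ((if a = p then 1 else 0) * X (bar a) q) := by
      intro a
      have hiff : bar a = q ↔ a = bar q :=
        ⟨fun h => by rw [← h, bar_bar], fun h => by rw [h, bar_bar]⟩
      simp only [Pi.sub_apply, Pi.smul_apply, smul_eq_mul, tens, colVec, stdVec,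
        Pi.single_apply, hiff]
    rw [Finset.sum_congr rfl (fun a _ => e1 a), Finset.sum_sub_distrib]
    simp only [mul_ite, mul_one, mul_zero, ite_mul, zero_mul,
      Finset.sum_ite_eq', Finset.mem_univ, if_true]
    rw [h p q]
    ring
  rw [hsum]
  simp

/-- Lemma A.5: the identity (A.7) holds for every member of the
explicit dual basis `{E*_{st}, X*_{st} (s≠t), X*_{ss}, Y*_{st} (s≠t)}` of
`g* ⊂ gl(n|n)`, with the appropriate parities. -/
theorem eps_dual_basis_identity {n : ℕ} (s t : Fin n) :
    EpsIdent (Estar s t) false ∧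
    (s ≠ t → EpsIdent (Xstar s t) true) ∧
    EpsIdent (Xstarss s) true ∧
    (s ≠ t → EpsIdent (Ystar s t) true) := by
  refine ⟨?_, fun _ => ?_, ?_, fun _ => ?_⟩ <;>
  · apply epsIdent_of
    intro p q
    rcases p with p | p <;> rcases q with q | q <;>
      simp only [Estar, Xstar, Xstarss, Ystar, bar, Sum.swap, hSign, pIdx, Sum.elim_inl,
        Sum.elim_inr, Bool.and_false, Bool.and_true, if_false, if_true,
        Matrix.smul_apply, Matrix.add_apply, Matrix.sub_apply, Matrix.neg_apply,
        Matrix.single, Matrix.of_apply, Sum.inl.injEq, Sum.inr.injEq,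
        reduceCtorEq, false_and, and_false, if_neg, smul_eq_mul] <;>
      (try split_ifs) <;> simp_all <;> try grind
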